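/- Let k ≥ 1. Suppose λ : Fin n → ℝ has exactly k indices with |λ i| = 1 and |λ i| < 1 for all remaining indices (the eigenvalue profile of a hidden layer with k well-separated clusters), and for each class label y_j (j = 1,…,k) the conditional eigenvalue profile μ^{(j)} : Fin n_j → ℝ has exactly one index with |μ^{(j)} i| = 1 and modulus < 1 elsewhere (each class lies in a single connected cluster). Let p_1,…,p_k ≥ 0 with Σ_j p_j = 1. Then the diffusion spectral mutual information I(t) = S(λ, t) − Σ_{j=1}^k p_j · S(μ^{(j)}, t) satisfies lim_{t → ∞} I(t) = log k. -/

import Mathlib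

/-! As `t → ∞` the weights `α_{i,t}` converge to the uniform distribution on the `k` indices of
modulus one, whose entropy is `log k`; for the class-conditional profiles `k = 1`, so their
entropies vanish in the limit and only `S(λ, t) → log k` survives. -/

open Real Filter

/-- Diffusion spectral entropy of an eigenvalue list `lam` at diffusion time `t`:
`S(λ, t) = -∑ i, α_{i,t} log α_{i,t}` where `α_{i,t} = |λ_i|^t / ∑_j |λ_j|^t`. -/
noncomputable def diffusionSpectralEntropy {ι : Type*} [Fintype ι] (lam : ι → ℝ) (t : ℝ) : ℝ :=
  -∑ i, (|lam i| ^ t / ∑ j, |lam j| ^ t) * Real.log (|lam i| ^ t / ∑ j, |lam j| ^ t)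

open Finset Topology

theorem tendsto_rpow_atTop_of_le_one {x : ℝ} (h0 : 0 ≤ x) (h1 : x ≤ 1) :
    Tendsto (fun t : ℝ => x ^ t) atTop (𝓝 (if x = 1 then 1 else 0)) := by
  split_ifs with hx
  · simp only [hx, one_rpow, tendsto_const_nhds]
  · exact tendsto_rpow_atTop_of_base_lt_one x (by linarith) (lt_of_le_of_ne h1 hx)

theorem diffusionSpectralEntropy_eq_sum_negMulLog {ι : Type*} [Fintype ι] (lam : ι → ℝ) (t : ℝ) :
    diffusionSpectralEntropy lam t = ∑ i, negMulLog (|lam i| ^ t / ∑ j, |lam j| ^ t) := by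
  simp only [diffusionSpectralEntropy, negMulLog, ← sum_neg_distrib, neg_mul]

theorem sum_negMulLog_uniform {ι : Type*} [Fintype ι] [DecidableEq ι] (s : Finset ι) :
    ∑ i, negMulLog ((if i ∈ s then 1 else 0) / #s) = log #s := by
  simp only [ite_div, zero_div, apply_ite negMulLog, negMulLog_zero, Fintype.sum_ite_mem,
    sum_const, nsmul_eq_mul]
  rcases (Nat.cast_nonneg (α := ℝ) #s).eq_or_lt with hs | hs
  · simp [← hs]
  · simp only [negMulLog, one_div, log_inv]
    field_simp

theorem tendsto_diffusionSpectralEntropy_atTop {ι : Type*} [Fintype ι] (lam : ι → ℝ) {k : ℕ}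
    (hk : 1 ≤ k) (hcard : #{i | |lam i| = 1} = k) (hle : ∀ i, |lam i| ≤ 1) :
    Tendsto (diffusionSpectralEntropy lam) atTop (𝓝 (log k)) := by
  classical
  set s : Finset ι := {i | |lam i| = 1}
  have hpow (i : ι) : Tendsto (fun t : ℝ => |lam i| ^ t) atTop (𝓝 (if i ∈ s then 1 else 0)) := by
    simpa [s] using tendsto_rpow_atTop_of_le_one (abs_nonneg (lam i)) (hle i)
  have hsum : Tendsto (fun t : ℝ => ∑ j, |lam j| ^ t) atTop (𝓝 (#s : ℝ)) := by
    simpa [sum_boole] using tendsto_finsetSum univ fun i _ => hpow i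
  have hk0 : (#s : ℝ) ≠ 0 := by rw [hcard]; exact_mod_cast (Nat.one_le_iff_ne_zero.mp hk)
  have hweight (i : ι) := (hpow i).div hsum hk0
  rw [← hcard, ← sum_negMulLog_uniform s, funext (diffusionSpectralEntropy_eq_sum_negMulLog lam)]
  exact tendsto_finsetSum univ fun i _ => continuous_negMulLog.continuousAt.tendsto.comp (hweight i)

theorem dsmi_tendsto_log_k_general {n k : ℕ} (hk : 1 ≤ k)
    (lam : Fin n → ℝ)
    (hcard : (Finset.univ.filter fun i => |lam i| = 1).card = k)
    (hlt : ∀ i, |lam i| ≠ 1 → |lam i| < 1)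
    (nj : Fin k → ℕ) (μ : (j : Fin k) → Fin (nj j) → ℝ)
    (hμcard : ∀ j, (Finset.univ.filter fun i => |μ j i| = 1).card = 1)
    (hμlt : ∀ j i, |μ j i| ≠ 1 → |μ j i| < 1)
    (p : Fin k → ℝ) :
    Tendsto
      (fun t => diffusionSpectralEntropy lam t - ∑ j, p j * diffusionSpectralEntropy (μ j) t)
      atTop (nhds (Real.log k)) := by
  have hS := tendsto_diffusionSpectralEntropy_atTop lam hk hcard
    fun i => (eq_or_ne _ _).elim le_of_eq fun h => (hlt i h).le
  have hSμ (j : Fin k) : Tendsto (diffusionSpectralEntropy (μ j)) atTop (𝓝 0) := by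
    simpa using tendsto_diffusionSpectralEntropy_atTop (μ j) le_rfl (hμcard j)
      fun i => (eq_or_ne _ _).elim le_of_eq fun h => (hμlt j i h).le
  simpa using hS.sub (tendsto_finsetSum univ fun j _ => (hSμ j).const_mul (p j))

/-- If a hidden layer has eigenvalue profile `lam` with exactly `k` eigenvalues of modulus 1
(`k` well-separated clusters, all other moduli `< 1`), and each of the `k` class-conditional
eigenvalue profiles `μ j` has exactly one eigenvalue of modulus 1 (each class lies in a single
connected cluster, all other moduli `< 1`), then the diffusion spectral mutual information
`I(t) = S(λ, t) − ∑ j p_j S(μ^{(j)}, t)` tends to `log k` as `t → ∞`. -/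
theorem dsmi_tendsto_log_k {n k : ℕ} (hn : 1 ≤ n) (hk : 1 ≤ k)
    (lam : Fin n → ℝ)
    (hcard : (Finset.univ.filter fun i => |lam i| = 1).card = k)
    (hlt : ∀ i, |lam i| ≠ 1 → |lam i| < 1)
    (nj : Fin k → ℕ) (μ : (j : Fin k) → Fin (nj j) → ℝ)
    (hμcard : ∀ j, (Finset.univ.filter fun i => |μ j i| = 1).card = 1)
    (hμlt : ∀ j i, |μ j i| ≠ 1 → |μ j i| < 1)
    (p : Fin k → ℝ) (hp : ∀ j, 0 ≤ p j) (hps : ∑ j, p j = 1) :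
    Tendsto
      (fun t => diffusionSpectralEntropy lam t - ∑ j, p j * diffusionSpectralEntropy (μ j) t)
      atTop (nhds (Real.log k)) :=
  dsmi_tendsto_log_k_general hk lam hcard hlt nj μ hμcard hμlt p
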